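/- Let p ≥ 2 be an integer and χ_p > 0, and let (a_n)_{n∈ℤ} and (b_n)_{n∈ℤ} be real sequences with Σ_{n∈ℤ} (a_n² + b_n²) < ∞. Then there exists T > 0 and a family u = (u_n)_{n∈ℤ} of C² real functions on [0,T) solving the on-site lattice equation ü_n(t) = Δu_n(t) − χ_p·u_n(t)^p for all n ∈ ℤ and t ∈ [0,T), with u_n(0) = a_n and u̇_n(0) = b_n for all n, and with sup_{0≤t<T} Σ_{n∈ℤ} [ u̇_n(t)² + u_n(t)² ] < ∞; moreover u is the unique such solution on [0,T). -/

import Mathlib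

open Set Filter

/-- Lattice Green function `G₁(n,t) = (2/π) ∫_{-π}^{π} cos(2σn) sin(2t sin σ) sin σ dσ`. -/
noncomputable def G1fun (n : ℤ) (t : ℝ) : ℝ :=
  (2 / Real.pi) * ∫ σ in (-Real.pi)..Real.pi,
    Real.cos (2 * σ * (n : ℝ)) * Real.sin (2 * t * Real.sin σ) * Real.sin σ

/-- Lattice Green function `G(n,t) = (2/π) ∫_{-π}^{π} cos(2σn) sin(2t sin σ)/sin σ dσ`,
with the integrand extended by its limiting value `2t cos(2σn)` where `sin σ = 0`. -/
noncomputable def Gfun (n : ℤ) (t : ℝ) : ℝ :=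
  (2 / Real.pi) * ∫ σ in (-Real.pi)..Real.pi,
    if Real.sin σ = 0 then 2 * t * Real.cos (2 * σ * (n : ℝ))
    else Real.cos (2 * σ * (n : ℝ)) * Real.sin (2 * t * Real.sin σ) / Real.sin σ

/-- Discrete Laplacian `Δf_n = f_{n+1} + f_{n-1} - 2 f_n`. -/
noncomputable def lap (f : ℤ → ℝ) (n : ℤ) : ℝ := f (n + 1) + f (n - 1) - 2 * f n

/-- The tail sum `Σ_{m ≤ n-1} f_m`. -/
noncomputable def tailSum (f : ℤ → ℝ) (n : ℤ) : ℝ := ∑' m : {m : ℤ // m ≤ n - 1}, f m.1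

/-- Convergence of the tail series `Σ_{m ≤ n-1} f_m`. -/
def TailSummable (f : ℤ → ℝ) (n : ℤ) : Prop :=
  Summable (fun m : {m : ℤ // m ≤ n - 1} => f m.1)

/-- The family `α` (with time derivatives taken within `s`) has finite energy norm on `[0,T)`:
`sup_{0≤t<T} [ Σ_n (Σ_{m≤n-1} α̇_m(t))² + Σ_n α_n(t)² ] < ∞`
(in particular all the series involved converge). -/
def FiniteEnergyOn (α : ℤ → ℝ → ℝ) (s : Set ℝ) (T : ℝ) : Prop :=
  (∀ n : ℤ, ∀ t ∈ Ico (0 : ℝ) T, TailSummable (fun m => derivWithin (α m) s t) n) ∧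
  ∃ M : ℝ, ∀ t ∈ Ico (0 : ℝ) T,
    Summable (fun n : ℤ => (tailSum (fun m => derivWithin (α m) s t) n) ^ 2) ∧
    Summable (fun n : ℤ => (α n t) ^ 2) ∧
    (∑' n : ℤ, (tailSum (fun m => derivWithin (α m) s t) n) ^ 2)
      + (∑' n : ℤ, (α n t) ^ 2) ≤ M

/-- `α` solves the FPU lattice equation `α̈_n = Δα_n + χ Δ(α_n^p)` on `s`. -/
def SolvesFPU (p : ℕ) (χ : ℝ) (α : ℤ → ℝ → ℝ) (s : Set ℝ) : Prop :=
  ∀ n : ℤ, ∀ t ∈ s,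
    derivWithin (derivWithin (α n) s) s t
      = lap (fun m => α m t) n + χ * lap (fun m => (α m t) ^ p) n

/-- `α` solves the sine-Gordon lattice equation `α̈_n = Δα_n + χ Δ(sin α_n)` on `s`. -/
def SolvesSG (χ : ℝ) (α : ℤ → ℝ → ℝ) (s : Set ℝ) : Prop :=
  ∀ n : ℤ, ∀ t ∈ s,
    derivWithin (derivWithin (α n) s) s t
      = lap (fun m => α m t) n + χ * lap (fun m => Real.sin (α m t)) n

/-- `u` solves the on-site lattice equation `ü_n = Δu_n - χ u_n^p` on `s`. -/
def SolvesOnSite (p : ℕ) (χ : ℝ) (u : ℤ → ℝ → ℝ) (s : Set ℝ) : Prop :=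
  ∀ n : ℤ, ∀ t ∈ s,
    derivWithin (derivWithin (u n) s) s t = lap (fun m => u m t) n - χ * (u n t) ^ p

/-- On-site energy norm finiteness: `sup_{0≤t<T} Σ_n [u̇_n(t)² + u_n(t)²] < ∞`. -/
def OnSiteFiniteEnergy (u : ℤ → ℝ → ℝ) (s : Set ℝ) (T : ℝ) : Prop :=
  ∃ M : ℝ, ∀ t ∈ Ico (0 : ℝ) T,
    Summable (fun n : ℤ => (derivWithin (u n) s t) ^ 2 + (u n t) ^ 2) ∧
    (∑' n : ℤ, ((derivWithin (u n) s t) ^ 2 + (u n t) ^ 2)) ≤ M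

open scoped lp NNReal ENNReal
open Metric

/-!
For `z = (u, u̇)` the lattice is the first-order system `ż = F z` on `ℓ²(ℤ) × ℓ²(ℤ)`, with
`F (x, y) = (y, Δx - χ x^p)`. Since `Δ` is bounded and `‖·‖_∞ ≤ ‖·‖₂`, the coordinatewise power,
hence `F`, is Lipschitz on balls, and Picard–Lindelöf gives a local solution. Its coordinates solve
the lattice, and their energy is at most `2 ‖z(t)‖²`, bounded on the compact time interval.

A competing solution is only known coordinatewise, not as a differentiable `ℓ²`-valued curve, so
uniqueness is proved in the sup norm: finite energy bounds every `|u_n|` and `|u̇_n|`, so the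
difference `w` of two solutions satisfies
`|w_n(t)| + |ẇ_n(t)| ≤ C ∫₀ᵗ sup_m (|w_m| + |ẇ_m|)`, and iterating this from a uniform bound `B`
gives `|w_n(t)| ≤ B (C t)^j / j! → 0`.
-/

theorem exists_hasDerivWithinAt_Icc_of_lipschitzOnWith {E : Type*} [NormedAddCommGroup E]
    [NormedSpace ℝ E] [CompleteSpace E] {f : E → E} {x₀ : E} {a K : ℝ≥0} (ha : 0 < a)
    (hf : LipschitzOnWith K f (closedBall x₀ a)) :
    ∃ T > 0, ∃ γ : ℝ → E, γ 0 = x₀ ∧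
      ∀ t ∈ Icc 0 T, HasDerivWithinAt γ (f (γ t)) (Icc 0 T) t := by
  set L : ℝ≥0 := ‖f x₀‖₊ + K * a
  have hbound : ∀ x ∈ closedBall x₀ a, ‖f x‖ ≤ L := fun x hx => calc
    ‖f x‖ ≤ ‖f x₀‖ + ‖f x - f x₀‖ := norm_le_insert' _ _
    _ ≤ ‖f x₀‖ + K * a := by
      gcongr
      exact (hf.norm_sub_le hx (mem_closedBall_self a.2)).trans
        (by gcongr; exact mem_closedBall_iff_norm.mp hx)
  set T : ℝ := a / (L + 1)
  have hT : 0 < T := by positivity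
  have hPL : IsPicardLindelof (fun _ => f) (tmin := 0) (tmax := T) ⟨0, le_rfl, hT.le⟩ x₀ a 0 L K :=
    IsPicardLindelof.of_time_independent hbound hf (by
      simp only [sub_zero, sub_self, max_eq_left hT.le, NNReal.coe_zero]
      calc (L : ℝ) * (a / (L + 1)) = L / (L + 1) * a := by ring
        _ ≤ 1 * a := by gcongr; rw [div_le_one (by positivity)]; linarith
        _ = a := one_mul _)
  exact ⟨T, hT, hPL.exists_eq_forall_mem_Icc_hasDerivWithinAt₀⟩

lemma contDiffOn_two_of_hasDerivWithinAt {s : Set ℝ} (hs : UniqueDiffOn ℝ s) {g g' g'' : ℝ → ℝ}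
    (hg : ∀ t ∈ s, HasDerivWithinAt g (g' t) s t) (hg' : ∀ t ∈ s, HasDerivWithinAt g' (g'' t) s t)
    (hg'' : ContinuousOn g'' s) : ContDiffOn ℝ 2 g s := by
  have hderiv : ∀ {f f' : ℝ → ℝ}, (∀ t ∈ s, HasDerivWithinAt f (f' t) s t) →
      ContDiffOn ℝ 0 f' s → ContDiffOn ℝ 1 f s := fun hf hf' => by
    rw [show (1 : WithTop ℕ∞) = 0 + 1 from rfl, contDiffOn_succ_iff_derivWithin hs]
    exact ⟨fun t ht => (hf t ht).differentiableWithinAt, by simp,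
      hf'.congr fun t ht => (hf t ht).derivWithin (hs t ht)⟩
  rw [show (2 : WithTop ℕ∞) = 1 + 1 from rfl, contDiffOn_succ_iff_derivWithin hs]
  exact ⟨fun t ht => (hg t ht).differentiableWithinAt, by simp,
    (hderiv hg' (contDiffOn_zero.mpr hg'')).congr fun t ht => (hg t ht).derivWithin (hs t ht)⟩

lemma norm_le_of_hasDerivWithinAt_Ico {E : Type*} [NormedAddCommGroup E] [NormedSpace ℝ E]
    {g g' : ℝ → E} {T t c : ℝ} {k : ℕ}
    (hg : ∀ σ ∈ Ico 0 T, HasDerivWithinAt g (g' σ) (Ico 0 T) σ) (hg0 : g 0 = 0)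
    (hbound : ∀ σ ∈ Ico 0 T, ‖g' σ‖ ≤ c * σ ^ k) (ht : t ∈ Ico 0 T) :
    ‖g t‖ ≤ c * t ^ (k + 1) / (k + 1) := by
  have hsub : Icc 0 t ⊆ Ico 0 T := Icc_subset_Ico_right ht.2
  refine image_norm_le_of_norm_deriv_right_le_deriv_boundary
    (B := fun σ => c * σ ^ (k + 1) / (k + 1))
    (fun σ hσ => (hg σ (hsub hσ)).continuousWithinAt.mono hsub)
    (fun σ hσ => (hg σ (hsub (Ico_subset_Icc_self hσ))).mono_of_mem_nhdsWithin
      (mem_of_superset (Ico_mem_nhdsGE (hσ.2.trans ht.2)) (Ico_subset_Ico_left hσ.1)))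
    (by simp [hg0]) (fun σ => ?_) (fun σ hσ => hbound σ (hsub (Ico_subset_Icc_self hσ)))
    ⟨ht.1, le_rfl⟩
  refine (((hasDerivAt_pow (k + 1) σ).const_mul c).div_const ((k : ℝ) + 1)).congr_deriv ?_
  push_cast
  field_simp

lemma le_zero_of_iterated_pow_bound {ι : Type*} {s : Set ℝ} {g : ι → ℝ → ℝ} {B C : ℝ}
    (hB : ∀ i, ∀ t ∈ s, g i t ≤ B)
    (hstep : ∀ (c : ℝ) (k : ℕ), (∀ i, ∀ t ∈ s, g i t ≤ c * t ^ k) →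
      ∀ i, ∀ t ∈ s, g i t ≤ C * c * t ^ (k + 1) / (k + 1)) :
    ∀ i, ∀ t ∈ s, g i t ≤ 0 := by
  have key (j : ℕ) : ∀ i, ∀ t ∈ s, g i t ≤ B * C ^ j / j.factorial * t ^ j := by
    induction j with
    | zero => simpa using hB
    | succ j ih =>
      intro i t ht
      refine (hstep _ j ih i t ht).trans_eq ?_
      rw [Nat.factorial_succ]
      push_cast
      field_simp
      ring
  intro i t ht
  have hlim : Tendsto (fun j : ℕ => B * ((C * t) ^ j / j.factorial)) atTop (nhds 0) := by
    simpa using (FloorSemiring.tendsto_pow_div_factorial_atTop (C * t)).const_mul B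
  exact ge_of_tendsto' hlim fun j => (key j i t ht).trans_eq (by rw [mul_pow]; ring)

section Reindex

variable {ι E : Type*} [NormedAddCommGroup E] {p : ℝ≥0∞}

lemma Memℓp.comp_equiv (hp : 0 < p.toReal) {f : ι → E} (hf : Memℓp f p) (e : ι ≃ ι) :
    Memℓp (f ∘ e) p := by
  rw [memℓp_gen_iff hp] at hf ⊢
  exact e.summable_iff.mpr hf

variable [NormedSpace ℝ E] [Fact (1 ≤ p)]

noncomputable def lpCompEquiv (hp : 0 < p.toReal) (e : ι ≃ ι) : ℓ^p(ι, E) →L[ℝ] ℓ^p(ι, E) :=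
  LinearMap.mkContinuous
    { toFun := fun x => ⟨x ∘ e, (lp.memℓp x).comp_equiv hp e⟩
      map_add' := fun _ _ => rfl
      map_smul' := fun _ _ => rfl }
    1 fun x => by
      rw [one_mul]
      refine lp.norm_le_of_tsum_le hp (norm_nonneg _) ?_
      rw [lp.norm_rpow_eq_tsum hp]
      exact (e.tsum_eq fun i => ‖x i‖ ^ p.toReal).le

@[simp]
lemma lpCompEquiv_apply (hp : 0 < p.toReal) (e : ι ≃ ι) (x : ℓ^p(ι, E)) (i : ι) :
    lpCompEquiv hp e x i = x (e i) := rfl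

lemma HasDerivWithinAt.lp_apply {γ : ℝ → ℓ^p(ι, E)} {γ' : ℓ^p(ι, E)} {s : Set ℝ} {t : ℝ}
    (h : HasDerivWithinAt γ γ' s t) (i : ι) : HasDerivWithinAt (fun τ => γ τ i) (γ' i) s t :=
  (lp.evalCLM ℝ (fun _ => E) p i).hasFDerivAt.comp_hasDerivWithinAt (x := t) h

end Reindex

lemma memℓp_two_iff_summable_sq {ι : Type*} {f : ι → ℝ} :
    Memℓp f 2 ↔ Summable fun i => f i ^ 2 := by
  simp [memℓp_gen_iff (p := 2) (by norm_num)]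

lemma hasSum_sq_lp {ι : Type*} (x : ℓ²(ι, ℝ)) : HasSum (fun i => x i ^ 2) (‖x‖ ^ 2) := by
  simpa [real_inner_self_eq_norm_sq, sq] using lp.hasSum_inner (𝕜 := ℝ) x x

section Power

variable {ι : Type*} {p : ℝ≥0∞} [Fact (1 ≤ p)]

lemma abs_apply_le_norm (x : ℓ^p(ι, ℝ)) (i : ι) : |x i| ≤ ‖x‖ :=
  lp.norm_apply_le_norm (zero_lt_one.trans_le Fact.out).ne' x i

noncomputable def lpPowSucc (k : ℕ) (x : ℓ^p(ι, ℝ)) : ℓ^p(ι, ℝ) :=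
  ⟨fun i => x i ^ (k + 1), (lp.memℓp (‖x‖ ^ k • x)).mono' fun i => by
    simp only [Real.norm_eq_abs, abs_pow, lp.coeFn_smul, Pi.smul_apply, smul_eq_mul, abs_mul,
      abs_of_nonneg (pow_nonneg (norm_nonneg x) k), pow_succ]
    gcongr
    exact abs_apply_le_norm x i⟩

@[simp]
lemma lpPowSucc_apply (k : ℕ) (x : ℓ^p(ι, ℝ)) (i : ι) : lpPowSucc k x i = x i ^ (k + 1) := rfl

lemma lipschitzOnWith_lpPowSucc (k : ℕ) (R : ℝ≥0) :
    LipschitzOnWith ((k + 1) * R ^ k) (lpPowSucc (p := p) (ι := ι) k) (closedBall 0 R) := by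
  refine LipschitzOnWith.of_dist_le_mul fun x hx y hy => ?_
  rw [mem_closedBall_zero_iff] at hx hy
  rw [dist_eq_norm, dist_eq_norm, ← norm_smul_of_nonneg (by positivity)]
  refine lp.norm_mono (zero_lt_one.trans_le Fact.out).ne' fun i => ?_
  simp only [lp.coeFn_sub, lp.coeFn_smul, Pi.sub_apply, Pi.smul_apply, lpPowSucc_apply,
    Real.norm_eq_abs, smul_eq_mul, abs_mul]
  calc |x i ^ (k + 1) - y i ^ (k + 1)|
      ≤ |x i - y i| * (k + 1 : ℕ) * max |x i| |y i| ^ k := abs_pow_sub_pow_le ..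
    _ ≤ |x i - y i| * (k + 1) * R ^ k := by
      push_cast
      gcongr
      exact max_le ((abs_apply_le_norm x i).trans hx) ((abs_apply_le_norm y i).trans hy)
    _ = _ := by rw [NNReal.abs_eq]; push_cast; ring

end Power

noncomputable def lapCLM : ℓ²(ℤ, ℝ) →L[ℝ] ℓ²(ℤ, ℝ) :=
  lpCompEquiv (by norm_num) (Equiv.addRight 1) + lpCompEquiv (by norm_num) (Equiv.addRight (-1))
    - (2 : ℝ) • ContinuousLinearMap.id ℝ _

lemma lapCLM_apply (x : ℓ²(ℤ, ℝ)) (n : ℤ) : lapCLM x n = lap x n := rfl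

noncomputable def onSiteField (k : ℕ) (χ : ℝ) (z : ℓ²(ℤ, ℝ) × ℓ²(ℤ, ℝ)) :
    ℓ²(ℤ, ℝ) × ℓ²(ℤ, ℝ) :=
  (z.2, lapCLM z.1 - χ • lpPowSucc k z.1)

lemma onSiteField_snd_apply (k : ℕ) (χ : ℝ) (z : ℓ²(ℤ, ℝ) × ℓ²(ℤ, ℝ)) (n : ℤ) :
    (onSiteField k χ z).2 n = lap (fun m => z.1 m) n - χ * z.1 n ^ (k + 1) := by
  simp only [onSiteField, lp.coeFn_sub, lp.coeFn_smul, Pi.sub_apply, Pi.smul_apply, smul_eq_mul,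
    lapCLM_apply, lpPowSucc_apply]

lemma exists_lipschitzOnWith_onSiteField (k : ℕ) (χ : ℝ) (R : ℝ≥0) :
    ∃ K, LipschitzOnWith K (onSiteField k χ) (closedBall 0 R) := by
  have hfst : MapsTo Prod.fst (closedBall (0 : ℓ²(ℤ, ℝ) × ℓ²(ℤ, ℝ)) R) (closedBall 0 R) :=
    fun z hz => mem_closedBall_zero_iff.mpr ((norm_fst_le z).trans (mem_closedBall_zero_iff.mp hz))
  have hsnd := (lapCLM.lipschitz.lipschitzOnWith.sub ((lipschitzWith_smul χ).comp_lipschitzOnWith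
    (lipschitzOnWith_lpPowSucc k R))).comp LipschitzWith.prod_fst.lipschitzOnWith hfst
  exact ⟨_, LipschitzWith.prod_snd.lipschitzOnWith.prodMk hsnd⟩

lemma onSiteFiniteEnergy_of_norm_le {γ : ℝ → ℓ²(ℤ, ℝ) × ℓ²(ℤ, ℝ)} {s : Set ℝ} {T K : ℝ}
    (hderiv : ∀ n, ∀ t ∈ Ico 0 T, derivWithin (fun τ => (γ τ).1 n) s t = (γ t).2 n)
    (hK : ∀ t ∈ Ico 0 T, ‖γ t‖ ≤ K) :
    OnSiteFiniteEnergy (fun n t => (γ t).1 n) s T := by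
  refine ⟨2 * K ^ 2, fun t ht => ?_⟩
  have hsum : HasSum (fun n => derivWithin (fun τ => (γ τ).1 n) s t ^ 2 + (γ t).1 n ^ 2)
      (‖(γ t).2‖ ^ 2 + ‖(γ t).1‖ ^ 2) := by
    convert (hasSum_sq_lp (γ t).2).add (hasSum_sq_lp (γ t).1) using 2 with n
    rw [hderiv n t ht]
  have h1 : ‖(γ t).1‖ ≤ K := (norm_fst_le _).trans (hK t ht)
  have h2 : ‖(γ t).2‖ ≤ K := (norm_snd_le _).trans (hK t ht)
  refine ⟨hsum.summable, hsum.tsum_eq.trans_le ?_⟩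
  nlinarith [norm_nonneg (γ t).1, norm_nonneg (γ t).2]

lemma onSite_of_hasDerivWithinAt_onSiteField {k : ℕ} {χ T : ℝ}
    {γ : ℝ → ℓ²(ℤ, ℝ) × ℓ²(ℤ, ℝ)}
    (hγ : ∀ t ∈ Icc 0 T, HasDerivWithinAt γ (onSiteField k χ (γ t)) (Icc 0 T) t) :
    (∀ n, ContDiffOn ℝ 2 (fun t => (γ t).1 n) (Ico 0 T)) ∧
      SolvesOnSite (k + 1) χ (fun n t => (γ t).1 n) (Ico 0 T) ∧
      (∀ n, ∀ t ∈ Ico 0 T, derivWithin (fun τ => (γ τ).1 n) (Ico 0 T) t = (γ t).2 n) ∧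
      OnSiteFiniteEnergy (fun n t => (γ t).1 n) (Ico 0 T) T := by
  have hsub : Ico 0 T ⊆ Icc 0 T := Ico_subset_Icc_self
  have hs : UniqueDiffOn ℝ (Ico (0 : ℝ) T) := uniqueDiffOn_Ico 0 T
  have hγ' : ∀ t ∈ Ico 0 T, HasDerivWithinAt γ (onSiteField k χ (γ t)) (Ico 0 T) t :=
    fun t ht => (hγ t (hsub ht)).mono hsub
  have h1 : ∀ n, ∀ t ∈ Ico 0 T, HasDerivWithinAt (fun τ => (γ τ).1 n) ((γ t).2 n) (Ico 0 T) t :=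
    fun n t ht => ((ContinuousLinearMap.fst ℝ _ _).hasFDerivAt.comp_hasDerivWithinAt t
      (hγ' t ht)).lp_apply n
  have h2 : ∀ n, ∀ t ∈ Ico 0 T, HasDerivWithinAt (fun τ => (γ τ).2 n)
      (lap (fun m => (γ t).1 m) n - χ * (γ t).1 n ^ (k + 1)) (Ico 0 T) t := fun n t ht => by
    rw [← onSiteField_snd_apply]
    exact ((ContinuousLinearMap.snd ℝ _ _).hasFDerivAt.comp_hasDerivWithinAt t
      (hγ' t ht)).lp_apply n
  have hderiv : ∀ n, ∀ t ∈ Ico 0 T, derivWithin (fun τ => (γ τ).1 n) (Ico 0 T) t = (γ t).2 n :=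
    fun n t ht => (h1 n t ht).derivWithin (hs t ht)
  have hcont : ∀ n, ContinuousOn (fun t => (γ t).1 n) (Ico 0 T) :=
    fun n t ht => (h1 n t ht).continuousWithinAt
  obtain ⟨K, hK⟩ := isCompact_Icc.exists_bound_of_continuousOn
    fun t ht => (hγ t ht).continuousWithinAt
  refine ⟨fun n => contDiffOn_two_of_hasDerivWithinAt hs (h1 n) (h2 n) ?_, fun n t ht => ?_,
    hderiv, onSiteFiniteEnergy_of_norm_le hderiv fun t ht => hK t (hsub ht)⟩
  · simp only [lap]
    fun_prop
  · rw [derivWithin_congr (fun τ hτ => hderiv n τ hτ) (hderiv n t ht)]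
    exact (h2 n t ht).derivWithin (hs t ht)

theorem exists_onSite_solution (k : ℕ) (χ : ℝ) (a b : ℓ²(ℤ, ℝ)) :
    ∃ T > 0, ∃ u : ℤ → ℝ → ℝ,
      (∀ n, ContDiffOn ℝ 2 (u n) (Ico 0 T)) ∧ SolvesOnSite (k + 1) χ u (Ico 0 T) ∧
      (∀ n, u n 0 = a n) ∧ (∀ n, derivWithin (u n) (Ico 0 T) 0 = b n) ∧
      OnSiteFiniteEnergy u (Ico 0 T) T := by
  obtain ⟨K, hK⟩ := exists_lipschitzOnWith_onSiteField k χ (‖(a, b)‖₊ + 1)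
  obtain ⟨T, hT, γ, hγ0, hγ⟩ := exists_hasDerivWithinAt_Icc_of_lipschitzOnWith (x₀ := (a, b))
    one_pos (hK.mono (closedBall_subset_closedBall' (by simp [add_comm])))
  obtain ⟨hC2, hsol, hderiv, henergy⟩ := onSite_of_hasDerivWithinAt_onSiteField hγ
  exact ⟨T, hT, _, hC2, hsol, fun n => by simp [hγ0],
    fun n => by rw [hderiv n 0 ⟨le_rfl, hT⟩, hγ0], henergy⟩

lemma SolvesOnSite.hasDerivWithinAt {p : ℕ} {χ : ℝ} {s : Set ℝ} {u : ℤ → ℝ → ℝ}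
    (hsol : SolvesOnSite p χ u s) (hs : UniqueDiffOn ℝ s) {n : ℤ} (hu : ContDiffOn ℝ 2 (u n) s)
    {t : ℝ} (ht : t ∈ s) :
    HasDerivWithinAt (u n) (derivWithin (u n) s t) s t ∧
      HasDerivWithinAt (derivWithin (u n) s) (lap (fun m => u m t) n - χ * u n t ^ p) s t :=
  ⟨(hu.differentiableOn two_ne_zero t ht).hasDerivWithinAt, hsol n t ht ▸
    ((hu.derivWithin hs (by norm_num : (1 : WithTop ℕ∞) + 1 ≤ 2)).differentiableOn
      one_ne_zero t ht).hasDerivWithinAt⟩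

lemma abs_onSite_rhs_sub_le (k : ℕ) (χ : ℝ) {R c : ℝ} {f g : ℤ → ℝ} (hf : ∀ m, |f m| ≤ R)
    (hg : ∀ m, |g m| ≤ R) (hfg : ∀ m, |f m - g m| ≤ c) (n : ℤ) :
    |(lap f n - χ * f n ^ (k + 1)) - (lap g n - χ * g n ^ (k + 1))|
      ≤ (4 + |χ| * ((k + 1) * R ^ k)) * c := by
  have hc : 0 ≤ c := (abs_nonneg _).trans (hfg n)
  have hpow : |χ * (f n ^ (k + 1) - g n ^ (k + 1))| ≤ |χ| * ((k + 1) * R ^ k) * c := by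
    rw [abs_mul, mul_assoc]
    gcongr
    calc |f n ^ (k + 1) - g n ^ (k + 1)|
        ≤ |f n - g n| * (k + 1 : ℕ) * max |f n| |g n| ^ k := abs_pow_sub_pow_le ..
      _ ≤ c * (k + 1) * R ^ k := by
        push_cast
        gcongr
        · exact hfg n
        · exact max_le (hf n) (hg n)
      _ = (k + 1) * R ^ k * c := by ring
  have hsplit : (lap f n - χ * f n ^ (k + 1)) - (lap g n - χ * g n ^ (k + 1))
      = (f (n + 1) - g (n + 1)) + (f (n - 1) - g (n - 1)) - 2 * (f n - g n)
        - χ * (f n ^ (k + 1) - g n ^ (k + 1)) := by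
    simp only [lap]
    ring
  rw [hsplit, abs_le]
  have h1 := abs_le.mp (hfg (n + 1))
  have h2 := abs_le.mp (hfg (n - 1))
  have h3 := abs_le.mp (hfg n)
  have h4 := abs_le.mp hpow
  constructor <;> nlinarith

lemma OnSiteFiniteEnergy.exists_abs_le {u : ℤ → ℝ → ℝ} {s : Set ℝ} {T : ℝ}
    (h : OnSiteFiniteEnergy u s T) :
    ∃ R, ∀ n, ∀ t ∈ Ico 0 T, |u n t| ≤ R ∧ |derivWithin (u n) s t| ≤ R := by
  obtain ⟨M, hM⟩ := h
  refine ⟨√M, fun n t ht => ?_⟩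
  obtain ⟨hsum, hle⟩ := hM t ht
  have hterm := (hsum.le_tsum n fun m _ => by positivity).trans hle
  exact ⟨Real.abs_le_sqrt (by nlinarith [sq_nonneg (derivWithin (u n) s t)]),
    Real.abs_le_sqrt (by nlinarith [sq_nonneg (u n t)])⟩

theorem onSite_eqOn_of_abs_le {k : ℕ} {χ T R₁ R₂ : ℝ} {u v : ℤ → ℝ → ℝ}
    (hu : ∀ n, ContDiffOn ℝ 2 (u n) (Ico 0 T)) (hv : ∀ n, ContDiffOn ℝ 2 (v n) (Ico 0 T))
    (hsu : SolvesOnSite (k + 1) χ u (Ico 0 T)) (hsv : SolvesOnSite (k + 1) χ v (Ico 0 T))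
    (h0 : ∀ n, v n 0 = u n 0)
    (h0' : ∀ n, derivWithin (v n) (Ico 0 T) 0 = derivWithin (u n) (Ico 0 T) 0)
    (hbu : ∀ n, ∀ t ∈ Ico 0 T, |u n t| ≤ R₁ ∧ |derivWithin (u n) (Ico 0 T) t| ≤ R₁)
    (hbv : ∀ n, ∀ t ∈ Ico 0 T, |v n t| ≤ R₂ ∧ |derivWithin (v n) (Ico 0 T) t| ≤ R₂) :
    ∀ n, ∀ t ∈ Ico 0 T, v n t = u n t := by
  set s := Ico (0 : ℝ) T
  have hs : UniqueDiffOn ℝ s := uniqueDiffOn_Ico 0 T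
  set w : ℤ → ℝ → ℝ := fun n t => v n t - u n t
  set w' : ℤ → ℝ → ℝ := fun n t => derivWithin (v n) s t - derivWithin (u n) s t
  have hdu := fun n σ (hσ : σ ∈ s) => hsu.hasDerivWithinAt hs (hu n) hσ
  have hdv := fun n σ (hσ : σ ∈ s) => hsv.hasDerivWithinAt hs (hv n) hσ
  have hbound : ∀ n, ∀ t ∈ s, |w n t| + |w' n t| ≤ 2 * (R₁ + R₂) := fun n t ht => by
    have h1 := abs_sub (v n t) (u n t)
    have h2 := abs_sub (derivWithin (v n) s t) (derivWithin (u n) s t)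
    linarith [hbu n t ht, hbv n t ht]
  have hstep : ∀ (c : ℝ) (j : ℕ), (∀ n, ∀ t ∈ s, |w n t| + |w' n t| ≤ c * t ^ j) →
      ∀ n, ∀ t ∈ s, |w n t| + |w' n t|
        ≤ (1 + (4 + |χ| * ((k + 1) * max R₁ R₂ ^ k))) * c * t ^ (j + 1) / (j + 1) := by
    intro c j hc n t ht
    have hw : |w n t| ≤ c * t ^ (j + 1) / (j + 1) := norm_le_of_hasDerivWithinAt_Ico
      (fun σ hσ => (hdv n σ hσ).1.sub (hdu n σ hσ).1)
      (by simp [h0]) (fun σ hσ => (le_add_of_nonneg_left (abs_nonneg _)).trans (hc n σ hσ)) ht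
    have hw' : |w' n t| ≤ (4 + |χ| * ((k + 1) * max R₁ R₂ ^ k)) * c * t ^ (j + 1) / (j + 1) :=
      norm_le_of_hasDerivWithinAt_Ico
        (fun σ hσ => (hdv n σ hσ).2.sub (hdu n σ hσ).2)
        (by simp [h0']) (fun σ hσ => (abs_onSite_rhs_sub_le k χ
          (fun m => (hbv m σ hσ).1.trans (le_max_right R₁ R₂))
          (fun m => (hbu m σ hσ).1.trans (le_max_left R₁ R₂))
          (fun m => (le_add_of_nonneg_right (abs_nonneg _)).trans (hc m σ hσ)) n).trans_eq
            (mul_assoc _ _ _).symm) ht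
    exact (add_le_add hw hw').trans_eq (by ring)
  intro n t ht
  have hw0 : |w n t| ≤ 0 := by
    linarith [le_zero_of_iterated_pow_bound hbound hstep n t ht, abs_nonneg (w' n t)]
  exact sub_eq_zero.mp (abs_nonpos_iff.mp hw0)

theorem onsite_local_existence_uniqueness_general (p : ℕ) (hp : 2 ≤ p) (χ : ℝ)
    (a b : ℤ → ℝ)
    (hab : Summable fun n : ℤ => (a n) ^ 2 + (b n) ^ 2) :
    ∃ T : ℝ, 0 < T ∧ ∃ u : ℤ → ℝ → ℝ,
      ((∀ n : ℤ, ContDiffOn ℝ 2 (u n) (Ico 0 T)) ∧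
        SolvesOnSite p χ u (Ico 0 T) ∧
        (∀ n : ℤ, u n 0 = a n) ∧
        (∀ n : ℤ, derivWithin (u n) (Ico 0 T) 0 = b n) ∧
        OnSiteFiniteEnergy u (Ico 0 T) T) ∧
      ∀ u' : ℤ → ℝ → ℝ,
        ((∀ n : ℤ, ContDiffOn ℝ 2 (u' n) (Ico 0 T)) ∧
          SolvesOnSite p χ u' (Ico 0 T) ∧
          (∀ n : ℤ, u' n 0 = a n) ∧
          (∀ n : ℤ, derivWithin (u' n) (Ico 0 T) 0 = b n) ∧
          OnSiteFiniteEnergy u' (Ico 0 T) T) →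
        ∀ n : ℤ, ∀ t ∈ Ico (0 : ℝ) T, u' n t = u n t := by
  obtain ⟨k, rfl⟩ : ∃ k, p = k + 1 := ⟨p - 1, by omega⟩
  have ha : Memℓp a 2 := memℓp_two_iff_summable_sq.mpr <|
    hab.of_nonneg_of_le (fun n => sq_nonneg _) fun n => le_add_of_nonneg_right (sq_nonneg _)
  have hb : Memℓp b 2 := memℓp_two_iff_summable_sq.mpr <|
    hab.of_nonneg_of_le (fun n => sq_nonneg _) fun n => le_add_of_nonneg_left (sq_nonneg _)
  obtain ⟨T, hT, u, hu⟩ := exists_onSite_solution k χ ⟨a, ha⟩ ⟨b, hb⟩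
  refine ⟨T, hT, u, hu, fun u' ⟨hC', hsol', ha', hb', hE'⟩ => ?_⟩
  obtain ⟨hC, hsol, ha₀, hb₀, hE⟩ := hu
  obtain ⟨R₁, hR₁⟩ := hE.exists_abs_le
  obtain ⟨R₂, hR₂⟩ := hE'.exists_abs_le
  exact onSite_eqOn_of_abs_le hC hC' hsol hsol' (fun n => (ha' n).trans (ha₀ n).symm)
    (fun n => (hb' n).trans (hb₀ n).symm) hR₁ hR₂

/-- local existence and uniqueness for the on-site lattice
`ü_n = Δu_n - χ_p u_n^p` with square-summable initial data. -/
theorem onsite_local_existence_uniqueness (p : ℕ) (hp : 2 ≤ p) (χ : ℝ) (hχ : 0 < χ)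
    (a b : ℤ → ℝ)
    (hab : Summable fun n : ℤ => (a n) ^ 2 + (b n) ^ 2) :
    ∃ T : ℝ, 0 < T ∧ ∃ u : ℤ → ℝ → ℝ,
      ((∀ n : ℤ, ContDiffOn ℝ 2 (u n) (Ico 0 T)) ∧
        SolvesOnSite p χ u (Ico 0 T) ∧
        (∀ n : ℤ, u n 0 = a n) ∧
        (∀ n : ℤ, derivWithin (u n) (Ico 0 T) 0 = b n) ∧
        OnSiteFiniteEnergy u (Ico 0 T) T) ∧
      ∀ u' : ℤ → ℝ → ℝ,
        ((∀ n : ℤ, ContDiffOn ℝ 2 (u' n) (Ico 0 T)) ∧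
          SolvesOnSite p χ u' (Ico 0 T) ∧
          (∀ n : ℤ, u' n 0 = a n) ∧
          (∀ n : ℤ, derivWithin (u' n) (Ico 0 T) 0 = b n) ∧
          OnSiteFiniteEnergy u' (Ico 0 T) T) →
        ∀ n : ℤ, ∀ t ∈ Ico (0 : ℝ) T, u' n t = u n t :=
  onsite_local_existence_uniqueness_general p hp χ a b hab
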